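/- arXiv:1305.2375 — 3 statements merged into one kernel-verified Lean document; each statement's English description precedes it below -/
import Mathlib

section
/- For every w ∈ H^1(0,N) and all positive reals α and N, one has -((α(1+αN))/N)·∫₀^N w(t)² dt ≤ -α·w(0)² + ∫₀^N w'(t)² dt. -/
/-!
By the fundamental theorem of calculus, `w 0 ^ 2 - w t ^ 2 = -∫₀ᵗ 2 w w'`, and the pointwise bound
`-2 w w' ≤ α w² + w'² / α` gives `w 0 ^ 2 ≤ w t ^ 2 + α ∫₀ᴺ w² + α⁻¹ ∫₀ᴺ w'²` for every `t ∈ [0, N]`.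
Averaging over `t` and multiplying by `α` yields the claim.
-/

open MeasureTheory Real Set

theorem MeasureTheory.Integrable.mul_of_integrable_sq {α : Type*} [MeasurableSpace α]
    {μ : Measure α} {f g : α → ℝ} (hf : AEStronglyMeasurable f μ) (hg : AEStronglyMeasurable g μ)
    (hf2 : Integrable (fun x => f x ^ 2) μ) (hg2 : Integrable (fun x => g x ^ 2) μ) :
    Integrable (fun x => f x * g x) μ :=
  ((memLp_two_iff_integrable_sq hf).2 hf2).integrable_mul ((memLp_two_iff_integrable_sq hg).2 hg2)

section

variable {a b : ℝ} {w w' : ℝ → ℝ}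

theorem aestronglyMeasurable_of_forall_hasDerivAt
    (hderiv : ∀ t ∈ Icc a b, HasDerivAt w (w' t) t) :
    AEStronglyMeasurable w' (volume.restrict (Icc a b)) :=
  (measurable_deriv w).aestronglyMeasurable.congr <|
    (ae_restrict_iff' measurableSet_Icc).2 <| .of_forall fun t ht => (hderiv t ht).deriv

theorem intervalIntegrable_mul_of_forall_hasDerivAt (hab : a ≤ b)
    (hderiv : ∀ t ∈ Icc a b, HasDerivAt w (w' t) t)
    (hw'2 : IntervalIntegrable (fun t => w' t ^ 2) volume a b) :
    IntervalIntegrable (fun t => w t * w' t) volume a b := by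
  have hcont : ContinuousOn w (Icc a b) := HasDerivAt.continuousOn hderiv
  rw [intervalIntegrable_iff_integrableOn_Icc_of_le hab] at hw'2 ⊢
  exact Integrable.mul_of_integrable_sq (hcont.aestronglyMeasurable measurableSet_Icc)
    (aestronglyMeasurable_of_forall_hasDerivAt hderiv)
    ((intervalIntegrable_iff_integrableOn_Icc_of_le hab).1
      ((hcont.pow 2).intervalIntegrable_of_Icc hab)) hw'2

theorem sq_sub_sq_le_integral (hab : a ≤ b) (hderiv : ∀ t ∈ Icc a b, HasDerivAt w (w' t) t)
    (hw'2 : IntervalIntegrable (fun t => w' t ^ 2) volume a b) {c : ℝ} (hc : 0 < c) :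
    w a ^ 2 - w b ^ 2 ≤ ∫ t in a..b, (c * w t ^ 2 + w' t ^ 2 / c) := by
  have hww' := intervalIntegrable_mul_of_forall_hasDerivAt hab hderiv hw'2
  have hftc : ∫ t in a..b, 2 * (w t * w' t) = w b ^ 2 - w a ^ 2 := by
    refine intervalIntegral.integral_eq_sub_of_hasDerivAt (f := fun t => w t ^ 2)
      (fun t ht => ?_) (hww'.const_mul 2)
    rw [uIcc_of_le hab] at ht
    simpa [mul_assoc] using (hderiv t ht).fun_pow 2
  have hw2 : IntervalIntegrable (fun t => w t ^ 2) volume a b :=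
    ((HasDerivAt.continuousOn hderiv).pow 2).intervalIntegrable_of_Icc hab
  -- `-2xy ≤ c x² + y²/c` is `(c x + y)² / c ≥ 0`
  have hpt : ∀ t ∈ Icc a b, -(2 * (w t * w' t)) ≤ c * w t ^ 2 + w' t ^ 2 / c := fun t _ => by
    have : 0 ≤ (c * w t + w' t) ^ 2 / c := by positivity
    rw [add_sq, add_div, add_div] at this
    field_simp at this ⊢
    linarith
  calc w a ^ 2 - w b ^ 2 = ∫ t in a..b, -(2 * (w t * w' t)) := by
        rw [intervalIntegral.integral_neg, hftc, neg_sub]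
    _ ≤ _ := intervalIntegral.integral_mono_on hab (hww'.const_mul 2).neg
        ((hw2.const_mul c).add (hw'2.div_const c)) hpt

theorem sub_mul_sq_le_integral_sq (hab : a ≤ b) (hderiv : ∀ t ∈ Icc a b, HasDerivAt w (w' t) t)
    (hw'2 : IntervalIntegrable (fun t => w' t ^ 2) volume a b) {c : ℝ} (hc : 0 < c) :
    (b - a) * w a ^ 2 ≤
      (1 + c * (b - a)) * (∫ t in a..b, w t ^ 2) + (b - a) / c * ∫ t in a..b, w' t ^ 2 := by
  have hw2 : IntervalIntegrable (fun t => w t ^ 2) volume a b :=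
    ((HasDerivAt.continuousOn hderiv).pow 2).intervalIntegrable_of_Icc hab
  have hF := (hw2.const_mul c).add (hw'2.div_const c)
  have hpt : ∀ t ∈ Icc a b,
      w a ^ 2 ≤ w t ^ 2 + ∫ s in a..b, (c * w s ^ 2 + w' s ^ 2 / c) := fun t ht => by
    have hat : uIcc a t ⊆ uIcc a b := uIcc_subset_uIcc left_mem_uIcc (by rwa [uIcc_of_le hab])
    have h1 := sq_sub_sq_le_integral ht.1 (fun s hs => hderiv s ⟨hs.1, hs.2.trans ht.2⟩)
      (hw'2.mono_set hat) hc
    have h2 : ∫ s in a..t, (c * w s ^ 2 + w' s ^ 2 / c) ≤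
        ∫ s in a..b, (c * w s ^ 2 + w' s ^ 2 / c) :=
      intervalIntegral.integral_mono_interval le_rfl ht.1 ht.2
        (.of_forall fun s => by positivity) hF
    linarith
  have h := intervalIntegral.integral_mono_on hab intervalIntegrable_const
    (hw2.add intervalIntegrable_const) hpt
  rw [intervalIntegral.integral_add hw2 intervalIntegrable_const, intervalIntegral.integral_const,
    intervalIntegral.integral_const,
    intervalIntegral.integral_add (hw2.const_mul c) (hw'2.div_const c),
    intervalIntegral.integral_const_mul, intervalIntegral.integral_div, smul_eq_mul, smul_eq_mul] at h
  calc _ ≤ _ := h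
    _ = _ := by ring

end

theorem boundary_term_lower_bound_general
    (w w' : ℝ → ℝ) (α N : ℝ) (hα : 0 < α) (hN : 0 < N)
    (hderiv : ∀ t ∈ Set.Icc (0:ℝ) N, HasDerivAt w (w' t) t)
    (hw'2 : IntervalIntegrable (fun t => (w' t)^2) volume 0 N) :
    -((α * (1 + α * N)) / N) * ∫ t in (0:ℝ)..N, (w t)^2
      ≤ -α * (w 0)^2 + ∫ t in (0:ℝ)..N, (w' t)^2 := by
  have h := sub_mul_sq_le_integral_sq hN.le hderiv hw'2 hα
  rw [sub_zero] at h
  have := mul_le_mul_of_nonneg_left h (div_nonneg hα.le hN.le)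
  field_simp at this ⊢
  linarith

theorem boundary_term_lower_bound
    (w w' : ℝ → ℝ) (α N : ℝ) (hα : 0 < α) (hN : 0 < N)
    (hderiv : ∀ t ∈ Set.Icc (0:ℝ) N, HasDerivAt w (w' t) t)
    (hw2 : IntervalIntegrable (fun t => (w t)^2) volume 0 N)
    (hw'2 : IntervalIntegrable (fun t => (w' t)^2) volume 0 N) :
    -((α * (1 + α * N)) / N) * ∫ t in (0:ℝ)..N, (w t)^2
      ≤ -α * (w 0)^2 + ∫ t in (0:ℝ)..N, (w' t)^2 :=
  boundary_term_lower_bound_general w w' α N hα hN hderiv hw'2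
end

section
/- For every w ∈ H^1(0,∞) with ∫₀^∞ |w'|² dt < ∞ and ∫_L^∞ w² dt < ∞, and positive reals α, L, one has M_L(α)·∫₀^L w(t)² dt ≤ ∫₀^∞ w'(t)² dt + α²·∫_L^∞ w(t)² dt, where M_L(α) = π²α/(L(4αL+π²)). -/
/-!
Set `μ = √M_L(α)`; the constant is chosen so that `μ L < π / 2` and `μ tan (μ L) ≤ α`, the latter
being the Becker–Stark inequality `(π² - 4x²) tan x ≤ π² x` at `x = μ L`. Since
`(μ tan (μ t) w²)' = μ² w² - w'² + (w' + μ tan (μ t) w)²` on `[0, L]`, integrating gives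
`μ² ∫₀^L w² ≤ ∫₀^L w'² + μ tan (μ L) w(L)²`. On the tail, `w²` and `(w²)'` are integrable, so
`w² → 0` and `α w(L)² = -∫_L^∞ 2α w w' ≤ ∫_L^∞ (α² w² + w'²)`.
-/

open MeasureTheory Real Set

/-- Concavity with `v 0 = 0` makes `v x / x` antitone, so `h' = x v` changes sign at most once,
from `+` to `-`: `h` rises, then falls between its zeros. -/
theorem nonneg_of_hasDerivAt_mul_of_concaveOn {h v : ℝ → ℝ} {b : ℝ}
    (hv : ConcaveOn ℝ (Icc 0 b) v) (hv0 : v 0 = 0) (hh : ∀ x, HasDerivAt h (x * v x) x)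
    (h0 : h 0 = 0) (hb : h b = 0) : ∀ x ∈ Icc 0 b, 0 ≤ h x := by
  have hslope : ∀ y z, 0 < y → y ≤ z → z ≤ b → v z / z ≤ v y / y := fun y z hy hyz hzb => by
    simpa [slope_def_field, hv0] using hv.antitoneOn_slope_gt (left_mem_Icc.2 (hy.le.trans
      (hyz.trans hzb))) ⟨⟨hy.le, hyz.trans hzb⟩, hy⟩ ⟨⟨hy.le.trans hyz, hzb⟩, hy.trans_le hyz⟩ hyz
  have hcont : Continuous h := continuous_iff_continuousAt.2 fun x => (hh x).continuousAt
  intro x ⟨hx0, hxb⟩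
  rcases le_or_gt 0 (v x) with hvx | hvx
  · have hmono : MonotoneOn h (Icc 0 x) := by
      refine monotoneOn_of_hasDerivWithinAt_nonneg (convex_Icc 0 x) hcont.continuousOn
        (fun y _ => (hh y).hasDerivWithinAt) fun y hy => ?_
      obtain ⟨hy0, hyx⟩ : 0 < y ∧ y < x := by rwa [interior_Icc] at hy
      have := (div_nonneg hvx (hy0.trans hyx).le).trans (hslope y x hy0 hyx.le hxb)
      exact mul_nonneg hy0.le (by simpa using (le_div_iff₀ hy0).1 this)
    simpa [h0] using hmono (left_mem_Icc.2 hx0) ⟨hx0, le_rfl⟩ hx0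
  · have hxpos : 0 < x := hx0.lt_of_ne (by rintro rfl; simp [hv0] at hvx)
    have hanti : AntitoneOn h (Icc x b) := by
      refine antitoneOn_of_hasDerivWithinAt_nonpos (convex_Icc x b) hcont.continuousOn
        (fun y _ => (hh y).hasDerivWithinAt) fun y hy => ?_
      obtain ⟨hxy, hyb⟩ : x < y ∧ y < b := by rwa [interior_Icc] at hy
      have hy0 : 0 < y := hxpos.trans hxy
      have := (hslope x y hxpos hxy.le hyb.le).trans (div_neg_of_neg_of_pos hvx hxpos).le
      exact mul_nonpos_of_nonneg_of_nonpos hy0.le (by simpa using (div_le_iff₀ hy0).1 this)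
    simpa [hb] using hanti ⟨le_rfl, hxb⟩ ⟨hxb, le_rfl⟩ hxb

theorem pi_sq_mul_cos_sub_mul_sin_nonneg {x : ℝ} (hx : x ∈ Icc 0 (π / 2)) :
    0 ≤ π ^ 2 * x * cos x - (π ^ 2 - 4 * x ^ 2) * sin x := by
  let v x := 4 * x * cos x + (8 - π ^ 2) * sin x
  let v' x := (12 - π ^ 2) * cos x - 4 * x * sin x
  have hv (x : ℝ) : HasDerivAt v (v' x) x :=
    ((((hasDerivAt_id' x).const_mul 4).fun_mul (hasDerivAt_cos x)).fun_add
      ((hasDerivAt_sin x).const_mul _)).congr_deriv (by ring)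
  have hv' (x : ℝ) : HasDerivAt v' ((π ^ 2 - 16) * sin x - 4 * x * cos x) x :=
    (((hasDerivAt_cos x).const_mul _).fun_sub
      (((hasDerivAt_id' x).const_mul 4).fun_mul (hasDerivAt_sin x))).congr_deriv (by ring)
  have hh (x : ℝ) : HasDerivAt (fun x => π ^ 2 * x * cos x - (π ^ 2 - 4 * x ^ 2) * sin x)
      (x * v x) x :=
    ((((hasDerivAt_id' x).const_mul _).fun_mul (hasDerivAt_cos x)).fun_sub
      ((((hasDerivAt_pow 2 x).const_mul 4).const_sub _).fun_mul (hasDerivAt_sin x))).congr_deriv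
      (by ring)
  have hconc : ConcaveOn ℝ (Icc 0 (π / 2)) v := by
    refine concaveOn_of_hasDerivWithinAt2_nonpos (convex_Icc _ _)
      (continuous_iff_continuousAt.2 fun x => (hv x).continuousAt).continuousOn
      (fun x _ => (hv x).hasDerivWithinAt) (fun x _ => (hv' x).hasDerivWithinAt) fun x hx => ?_
    obtain ⟨hx0, hx2⟩ : 0 < x ∧ x < π / 2 := by rwa [interior_Icc] at hx
    have hsin : 0 ≤ sin x := sin_nonneg_of_nonneg_of_le_pi hx0.le (by linarith [pi_pos])
    have hcos : 0 ≤ cos x := cos_nonneg_of_mem_Icc ⟨by linarith, hx2.le⟩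
    have hπ : π ^ 2 ≤ 16 := by nlinarith [pi_lt_four, pi_pos]
    nlinarith [mul_nonneg hsin (sub_nonneg.2 hπ), mul_nonneg hx0.le hcos]
  exact nonneg_of_hasDerivAt_mul_of_concaveOn hconc (by simp [v]) hh (by simp)
    (by simp [cos_pi_div_two, sin_pi_div_two]; ring) x hx

theorem pi_sq_sub_four_mul_sq_mul_tan_le {x : ℝ} (hx0 : 0 ≤ x) (hx : x < π / 2) :
    (π ^ 2 - 4 * x ^ 2) * tan x ≤ π ^ 2 * x := by
  have hcos : 0 < cos x := cos_pos_of_mem_Ioo ⟨by linarith [pi_pos], hx⟩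
  rw [tan_eq_sin_div_cos, ← mul_div_assoc, div_le_iff₀ hcos]
  linarith [pi_sq_mul_cos_sub_mul_sin_nonneg ⟨hx0, hx.le⟩]

theorem four_mul_sq_lt_pi_sq_of_sq_mul_eq {α L μ : ℝ} (hα : 0 ≤ α) (hL : 0 < L)
    (h : μ ^ 2 * (L * (4 * α * L + π ^ 2)) = π ^ 2 * α) : 4 * (μ * L) ^ 2 < π ^ 2 := by
  have key : (π ^ 2 - 4 * (μ * L) ^ 2) * (4 * α * L + π ^ 2) = π ^ 4 := by
    linear_combination (-4 * L) * h
  have : 0 < (π ^ 2 - 4 * (μ * L) ^ 2) * (4 * α * L + π ^ 2) := key ▸ by positivity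
  linarith [pos_of_mul_pos_left this (by positivity)]

theorem mul_lt_pi_div_two_of_sq_mul_eq {α L μ : ℝ} (hα : 0 ≤ α) (hL : 0 < L)
    (h : μ ^ 2 * (L * (4 * α * L + π ^ 2)) = π ^ 2 * α) : μ * L < π / 2 := by
  nlinarith [four_mul_sq_lt_pi_sq_of_sq_mul_eq hα hL h, pi_pos]

theorem mul_tan_mul_le_of_sq_mul_eq {α L μ : ℝ} (hα : 0 ≤ α) (hL : 0 < L) (hμ : 0 ≤ μ)
    (h : μ ^ 2 * (L * (4 * α * L + π ^ 2)) = π ^ 2 * α) : μ * tan (μ * L) ≤ α := by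
  have hpos : 0 < π ^ 2 - 4 * (μ * L) ^ 2 := by
    linarith [four_mul_sq_lt_pi_sq_of_sq_mul_eq hα hL h]
  have hbs := pi_sq_sub_four_mul_sq_mul_tan_le (by positivity)
    (mul_lt_pi_div_two_of_sq_mul_eq hα hL h)
  have : (π ^ 2 - 4 * (μ * L) ^ 2) * (μ * tan (μ * L) - α) ≤ 0 := by
    nlinarith [mul_le_mul_of_nonneg_left hbs hμ]
  nlinarith

theorem sq_mul_integral_sq_le_integral_deriv_sq_add_tan {w w' : ℝ → ℝ} {μ L : ℝ} (hL : 0 ≤ L)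
    (hμ : 0 ≤ μ) (hμL : μ * L < π / 2) (hderiv : ∀ t ∈ Icc 0 L, HasDerivAt w (w' t) t)
    (hw' : IntegrableOn (fun t => w' t ^ 2) (Ioc 0 L)) :
    μ ^ 2 * ∫ t in 0..L, w t ^ 2 ≤ (∫ t in 0..L, w' t ^ 2) + μ * tan (μ * L) * w L ^ 2 := by
  have hcos : ∀ t ∈ Icc 0 L, cos (μ * t) ≠ 0 := fun t ht =>
    (cos_pos_of_mem_Ioo ⟨by nlinarith [pi_pos, ht.1], by nlinarith [ht.2]⟩).ne'
  have hw : ContinuousOn w (Icc 0 L) := fun t ht => (hderiv t ht).continuousAt.continuousWithinAt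
  have hw2 : IntegrableOn (fun t => w t ^ 2) (Icc 0 L) := (hw.pow 2).integrableOn_Icc
  have hw'2 : IntegrableOn (fun t => w' t ^ 2) (Icc 0 L) := by
    rwa [integrableOn_Icc_iff_integrableOn_Ioc]
  have hF : ∀ t ∈ Icc 0 L, HasDerivAt (fun s => μ * tan (μ * s) * w s ^ 2)
      (μ * (μ * (1 / cos (μ * t) ^ 2)) * w t ^ 2 + μ * tan (μ * t) * (2 * w t * w' t)) t := by
    intro t ht
    have htan := (hasDerivAt_tan (hcos t ht)).comp t ((hasDerivAt_id' t).const_mul μ)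
    exact ((htan.const_mul μ).fun_mul ((hderiv t ht).fun_pow 2)).congr_deriv
      (by simp only [Function.comp_apply, Nat.cast_ofNat]; ring)
  have hφ : ∀ t ∈ Icc 0 L, μ ^ 2 * w t ^ 2 - w' t ^ 2 ≤
      μ * (μ * (1 / cos (μ * t) ^ 2)) * w t ^ 2 + μ * tan (μ * t) * (2 * w t * w' t) := by
    intro t ht
    rw [one_div, ← inv_one_add_tan_sq (hcos t ht), inv_inv]
    nlinarith [sq_nonneg (w' t + μ * tan (μ * t) * w t)]
  have := intervalIntegral.integral_le_sub_of_hasDeriv_right_of_le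
    (φ := fun t => μ ^ 2 * w t ^ 2 - w' t ^ 2) hL
    (fun t ht => (hF t ht).continuousAt.continuousWithinAt)
    (fun t ht => (hF t (Ioo_subset_Icc_self ht)).hasDerivWithinAt)
    (by exact (hw2.const_mul (μ ^ 2)).sub hw'2) (fun t ht => hφ t (Ioo_subset_Icc_self ht))
  rw [intervalIntegral.integral_sub
    ((intervalIntegrable_iff_integrableOn_Icc_of_le hL).2 (hw2.const_mul _))
    ((intervalIntegrable_iff_integrableOn_Icc_of_le hL).2 hw'2),
    intervalIntegral.integral_const_mul] at this
  simpa [add_comm] using this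

theorem aestronglyMeasurable_of_hasDerivAt {f f' : ℝ → ℝ} {s : Set ℝ} (hs : MeasurableSet s)
    (hf : ∀ t ∈ s, HasDerivAt f (f' t) t) : AEStronglyMeasurable f' (volume.restrict s) :=
  (aestronglyMeasurable_deriv f _).congr <|
    (ae_restrict_iff' hs).2 (ae_of_all _ fun t ht => (hf t ht).deriv)

theorem mul_sq_le_integral_Ioi {w w' : ℝ → ℝ} {a : ℝ} (α : ℝ)
    (hderiv : ∀ t ∈ Ici a, HasDerivAt w (w' t) t)
    (hw : IntegrableOn (fun t => w t ^ 2) (Ioi a))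
    (hw' : IntegrableOn (fun t => w' t ^ 2) (Ioi a)) :
    α * w a ^ 2 ≤ α ^ 2 * (∫ t in Ioi a, w t ^ 2) + ∫ t in Ioi a, w' t ^ 2 := by
  have hderiv' : ∀ t ∈ Ioi a, HasDerivAt w (w' t) t := fun t ht =>
    hderiv t (Ioi_subset_Ici_self ht)
  have hsq : ∀ t ∈ Ici a, HasDerivAt (fun s => w s ^ 2) (2 * w t * w' t) t := fun t ht =>
    ((hderiv t ht).fun_pow 2).congr_deriv (by simp)
  have hww' : IntegrableOn (fun t => 2 * w t * w' t) (Ioi a) := by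
    refine (hw.fun_add hw').mono' ?_ (ae_of_all _ fun t => ?_)
    · exact (((continuousOn_of_forall_continuousAt fun t ht =>
        (hderiv' t ht).continuousAt).aestronglyMeasurable measurableSet_Ioi).const_mul 2).mul
        (aestronglyMeasurable_of_hasDerivAt measurableSet_Ioi hderiv')
    · rw [norm_eq_abs, abs_le]
      constructor <;> nlinarith [sq_nonneg (w t + w' t), sq_nonneg (w t - w' t)]
  have hlim := tendsto_zero_of_hasDerivAt_of_integrableOn_Ioi
    (fun t ht => hsq t (Ioi_subset_Ici_self ht)) hww' hw
  have hftc := integral_Ioi_of_hasDerivAt_of_tendsto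
    (hsq a self_mem_Ici).continuousAt.continuousWithinAt
    (fun t ht => hsq t (Ioi_subset_Ici_self ht)) hww' hlim
  calc α * w a ^ 2 = ∫ t in Ioi a, -(α * (2 * w t * w' t)) := by
        rw [integral_neg, integral_const_mul, hftc]; ring
    _ ≤ ∫ t in Ioi a, (α ^ 2 * w t ^ 2 + w' t ^ 2) :=
        setIntegral_mono (hww'.const_mul α).neg ((hw.const_mul _).fun_add hw')
          fun t => by nlinarith [sq_nonneg (α * w t + w' t)]
    _ = α ^ 2 * (∫ t in Ioi a, w t ^ 2) + ∫ t in Ioi a, w' t ^ 2 := by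
        rw [integral_add (hw.const_mul _) hw', integral_const_mul]

theorem trace_inequality_with_tail
    (w w' : ℝ → ℝ) (α L : ℝ) (hα : 0 < α) (hL : 0 < L)
    (hderiv : ∀ t ∈ Set.Ici (0:ℝ), HasDerivAt w (w' t) t)
    (hw2 : IntegrableOn (fun t => (w t)^2) (Set.Ioi (0:ℝ)) volume)
    (hw'2 : IntegrableOn (fun t => (w' t)^2) (Set.Ioi (0:ℝ)) volume) :
    (π^2 * α / (L * (4 * α * L + π^2))) * ∫ t in (0:ℝ)..L, (w t)^2
      ≤ (∫ t in Set.Ioi (0:ℝ), (w' t)^2) + α^2 * ∫ t in Set.Ioi L, (w t)^2 := by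
  set μ := √(π ^ 2 * α / (L * (4 * α * L + π ^ 2)))
  have hμsq : μ ^ 2 = π ^ 2 * α / (L * (4 * α * L + π ^ 2)) := sq_sqrt (by positivity)
  have hμ : μ ^ 2 * (L * (4 * α * L + π ^ 2)) = π ^ 2 * α := by
    rw [hμsq]; field_simp
  have hIoi : Ioi L ⊆ Ioi 0 := Ioi_subset_Ioi hL.le
  have hpicone := sq_mul_integral_sq_le_integral_deriv_sq_add_tan hL.le (sqrt_nonneg _)
    (mul_lt_pi_div_two_of_sq_mul_eq hα.le hL hμ) (fun t ht => hderiv t ht.1)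
    (hw'2.mono_set Ioc_subset_Ioi_self)
  have htail := mul_sq_le_integral_Ioi α (fun t ht => hderiv t (hL.le.trans ht))
    (hw2.mono_set hIoi) (hw'2.mono_set hIoi)
  rw [← hμsq, ← intervalIntegral.integral_interval_add_Ioi hw'2 (hw'2.mono_set hIoi)]
  calc μ ^ 2 * ∫ t in 0..L, w t ^ 2
      ≤ (∫ t in 0..L, w' t ^ 2) + μ * tan (μ * L) * w L ^ 2 := hpicone
    _ ≤ (∫ t in 0..L, w' t ^ 2) + α * w L ^ 2 := by
      gcongr; exact mul_tan_mul_le_of_sq_mul_eq hα.le hL (sqrt_nonneg _) hμ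
    _ ≤ _ := by linarith
end

section
/- Let ν, L > 0 and let a : (−∞,−L] → ℝ be a C² function with a, a' ∈ L²(−∞,−L), a(x)→0 and a'(x)→0 as x→−∞, satisfying a'' (x) + ν² a(x) = f₂(x) with x·f₂ ∈ L²(−∞,−L). Then ν²·∫_{−∞}^{−L} a(x)² dx ≤ ∫_{−∞}^{−L} x²·f₂(x)² dx. -/
open MeasureTheory Set Filter Topology

/-! The energy `E = a'² + ν²a²` has derivative `2a'f₂`. Integrating `(x E)' = E + 2x a'f₂` over
`(-∞, -L]` gives `∫ a'² + ν² ∫ a² + ∫ 2x a'f₂ = -L E(-L) ≤ 0`. The boundary term at `-∞` vanishes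
because `|x E(x)| = |∫_{-∞}^x x E'| ≤ ∫_{-∞}^x |t E'(t)|`, and `-2x a'f₂ ≤ a'² + x²f₂²` finishes. -/

theorem aestronglyMeasurable_restrict_of_hasDerivAt {f f' : ℝ → ℝ} {s : Set ℝ}
    (hs : MeasurableSet s) (hf : ∀ x ∈ s, HasDerivAt f (f' x) x) :
    AEStronglyMeasurable f' (volume.restrict s) :=
  (measurable_deriv f).aestronglyMeasurable.congr <|
    (ae_restrict_mem hs).mono fun x hx => (hf x hx).deriv

section HalfLine

variable {f f' g : ℝ → ℝ} {a : ℝ}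

theorem memLp_Iic_of_memLp_id_mul {p : ENNReal} (ha : a < 0)
    (hg : MemLp (fun x => x * g x) p (volume.restrict (Iic a)))
    (hgm : AEStronglyMeasurable g (volume.restrict (Iic a))) :
    MemLp g p (volume.restrict (Iic a)) := by
  refine hg.of_le_mul (c := (-a)⁻¹) hgm ((ae_restrict_mem measurableSet_Iic).mono fun x hx => ?_)
  have hax : -a ≤ ‖x‖ := by
    rw [Real.norm_eq_abs, abs_of_neg (lt_of_le_of_lt hx ha)]
    exact neg_le_neg hx
  rw [norm_mul, ← mul_assoc]
  exact le_mul_of_one_le_left (norm_nonneg _) ((one_le_inv_mul₀ (neg_pos.2 ha)).2 hax)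

theorem memLp_two_Iic_of_integrableOn_sq_mul_sq (ha : a < 0)
    (hgm : AEStronglyMeasurable g (volume.restrict (Iic a)))
    (hg : IntegrableOn (fun x => x ^ 2 * g x ^ 2) (Iic a)) :
    MemLp g 2 (volume.restrict (Iic a)) ∧ MemLp (fun x => x * g x) 2 (volume.restrict (Iic a)) := by
  have hxg : MemLp (fun x => x * g x) 2 (volume.restrict (Iic a)) :=
    (memLp_two_iff_integrable_sq (f := fun x => x * g x) (aestronglyMeasurable_id.mul hgm)).2
      (by simp only [mul_pow]; exact hg)
  exact ⟨memLp_Iic_of_memLp_id_mul ha hxg hgm, hxg⟩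

theorem tendsto_setIntegral_Iic_atBot (hg : IntegrableOn g (Iic a)) :
    Tendsto (fun x => ∫ t in Iic x, g t) atBot (𝓝 0) := by
  have := tendsto_setIntegral_of_antitone (ι := ℝᵒᵈ) (μ := volume) (f := g)
    (s := fun i => Iic (OrderDual.ofDual i)) (fun _ => measurableSet_Iic)
    (fun i j hij => Iic_subset_Iic.2 hij) ⟨OrderDual.toDual a, hg⟩
  rwa [iInter_eq_empty_iff.2 fun x => ⟨OrderDual.toDual (x - 1), by simp⟩,
    Measure.restrict_empty, integral_zero_measure] at this

theorem tendsto_mul_atBot_of_hasDerivAt (hderiv : ∀ x ∈ Iic a, HasDerivAt f (f' x) x)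
    (hf' : IntegrableOn f' (Iic a)) (hxf' : IntegrableOn (fun x => x * f' x) (Iic a))
    (hlim : Tendsto f atBot (𝓝 0)) : Tendsto (fun x => x * f x) atBot (𝓝 0) := by
  refine squeeze_zero_norm' ?_ (tendsto_setIntegral_Iic_atBot hxf'.norm)
  filter_upwards [Iic_mem_atBot (min a 0)] with x hx
  have hxa : x ≤ a := hx.trans (min_le_left _ _)
  have hx0 : x ≤ 0 := hx.trans (min_le_right _ _)
  have hf_eq : f x = ∫ t in Iic x, f' t := by
    rw [integral_Iic_of_hasDerivAt_of_tendsto' (fun t ht => hderiv t (ht.out.trans hxa))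
      (hf'.mono_set (Iic_subset_Iic.2 hxa)) hlim, sub_zero]
  calc ‖x * f x‖ = ‖∫ t in Iic x, x * f' t‖ := by rw [hf_eq, integral_const_mul]
    _ ≤ ∫ t in Iic x, ‖x * f' t‖ := norm_integral_le_integral_norm _
    _ ≤ ∫ t in Iic x, ‖t * f' t‖ := by
      refine setIntegral_mono_on ((hf'.mono_set (Iic_subset_Iic.2 hxa)).const_mul x).norm
        (hxf'.mono_set (Iic_subset_Iic.2 hxa)).norm measurableSet_Iic fun t ht => ?_
      rw [norm_mul, norm_mul]
      gcongr
      rw [Real.norm_eq_abs, Real.norm_eq_abs, abs_of_nonpos hx0, abs_of_nonpos (ht.out.trans hx0)]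
      exact neg_le_neg ht

theorem integral_Iic_add_integral_mul_deriv (hderiv : ∀ x ∈ Iic a, HasDerivAt f (f' x) x)
    (hf : IntegrableOn f (Iic a)) (hf' : IntegrableOn f' (Iic a))
    (hxf' : IntegrableOn (fun x => x * f' x) (Iic a)) (hlim : Tendsto f atBot (𝓝 0)) :
    (∫ x in Iic a, f x) + ∫ x in Iic a, x * f' x = a * f a := by
  have hprod : ∀ x ∈ Iic a, HasDerivAt (fun y => y * f y) (f x + x * f' x) x := fun x hx =>
    ((hasDerivAt_id' x).fun_mul (hderiv x hx)).congr_deriv (by ring)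
  rw [← integral_add hf hxf', integral_Iic_of_hasDerivAt_of_tendsto' hprod (hf.add hxf')
    (tendsto_mul_atBot_of_hasDerivAt hderiv hf' hxf' hlim), sub_zero]

end HalfLine

theorem hasDerivAt_energy {a a' a'' : ℝ → ℝ} {ν x : ℝ} (ha : HasDerivAt a (a' x) x)
    (ha' : HasDerivAt a' (a'' x) x) :
    HasDerivAt (fun y => a' y ^ 2 + ν ^ 2 * a y ^ 2) (2 * (a' x * (a'' x + ν ^ 2 * a x))) x :=
  ((ha'.fun_pow 2).fun_add ((ha.fun_pow 2).const_mul (ν ^ 2))).congr_deriv (by push_cast; ring)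

theorem ode_estimate_halfline_general
    (a a' a'' f₂ : ℝ → ℝ) (ν L : ℝ) (hL : 0 < L)
    (hderiv : ∀ x ∈ Set.Iic (-L), HasDerivAt a (a' x) x)
    (hderiv' : ∀ x ∈ Set.Iic (-L), HasDerivAt a' (a'' x) x)
    (ha2 : IntegrableOn (fun x => (a x)^2) (Set.Iic (-L)) volume)
    (ha'2 : IntegrableOn (fun x => (a' x)^2) (Set.Iic (-L)) volume)
    (hlim : Filter.Tendsto a Filter.atBot (nhds 0))
    (hlim' : Filter.Tendsto a' Filter.atBot (nhds 0))
    (hode : ∀ x ∈ Set.Iic (-L), a'' x + ν^2 * a x = f₂ x)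
    (hf₂ : IntegrableOn (fun x => x^2 * (f₂ x)^2) (Set.Iic (-L)) volume) :
    ν^2 * ∫ x in Set.Iic (-L), (a x)^2 ≤ ∫ x in Set.Iic (-L), x^2 * (f₂ x)^2 := by
  set μ := volume.restrict (Iic (-L))
  have ham : AEStronglyMeasurable a μ := ContinuousOn.aestronglyMeasurable
    (fun x hx => (hderiv x hx).continuousAt.continuousWithinAt) measurableSet_Iic
  have hf₂m : AEStronglyMeasurable f₂ μ :=
    ((aestronglyMeasurable_restrict_of_hasDerivAt measurableSet_Iic hderiv').add
      (ham.const_mul _)).congr ((ae_restrict_mem measurableSet_Iic).mono hode)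
  have ha'L2 : MemLp a' 2 μ := (memLp_two_iff_integrable_sq
    (aestronglyMeasurable_restrict_of_hasDerivAt measurableSet_Iic hderiv)).2 ha'2
  obtain ⟨hf₂L2, hxf₂L2⟩ := memLp_two_Iic_of_integrableOn_sq_mul_sq (by linarith) hf₂m hf₂
  have hxh : Integrable (fun x => x * (2 * (a' x * f₂ x))) μ :=
    ((ha'L2.integrable_mul hxf₂L2).const_mul 2).congr
      (ae_of_all _ fun x => by simp only [Pi.mul_apply]; ring)
  have hparts := integral_Iic_add_integral_mul_deriv
    (f := fun x => a' x ^ 2 + ν ^ 2 * a x ^ 2) (f' := fun x => 2 * (a' x * f₂ x))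
    (fun x hx => hode x hx ▸ hasDerivAt_energy (hderiv x hx) (hderiv' x hx))
    (ha'2.add (ha2.const_mul _)) ((ha'L2.integrable_mul hf₂L2).const_mul 2) hxh
    (by simpa using (hlim'.pow 2).add ((hlim.pow 2).const_mul (ν ^ 2)))
  have hcross : -∫ x in Iic (-L), (a' x ^ 2 + x ^ 2 * f₂ x ^ 2) ≤
      ∫ x in Iic (-L), x * (2 * (a' x * f₂ x)) := by
    rw [← integral_neg]
    exact integral_mono (ha'2.add hf₂).neg hxh fun x => by
      nlinarith [sq_nonneg (a' x + x * f₂ x)]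
  have hboundary : -L * (a' (-L) ^ 2 + ν ^ 2 * a (-L) ^ 2) ≤ 0 :=
    mul_nonpos_of_nonpos_of_nonneg (by linarith) (by positivity)
  rw [integral_add ha'2 (ha2.const_mul _), integral_const_mul] at hparts
  rw [integral_add ha'2 hf₂] at hcross
  linarith

/-- ODE estimate (eq (gggg)) from Section 5 of the paper. -/
theorem ode_estimate_halfline
    (a a' a'' f₂ : ℝ → ℝ) (ν L : ℝ) (hν : 0 < ν) (hL : 0 < L)
    (hderiv : ∀ x ∈ Set.Iic (-L), HasDerivAt a (a' x) x)
    (hderiv' : ∀ x ∈ Set.Iic (-L), HasDerivAt a' (a'' x) x)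
    (ha2 : IntegrableOn (fun x => (a x)^2) (Set.Iic (-L)) volume)
    (ha'2 : IntegrableOn (fun x => (a' x)^2) (Set.Iic (-L)) volume)
    (hlim : Filter.Tendsto a Filter.atBot (nhds 0))
    (hlim' : Filter.Tendsto a' Filter.atBot (nhds 0))
    (hode : ∀ x ∈ Set.Iic (-L), a'' x + ν^2 * a x = f₂ x)
    (hf₂ : IntegrableOn (fun x => x^2 * (f₂ x)^2) (Set.Iic (-L)) volume) :
    ν^2 * ∫ x in Set.Iic (-L), (a x)^2 ≤ ∫ x in Set.Iic (-L), x^2 * (f₂ x)^2 :=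
  ode_estimate_halfline_general a a' a'' f₂ ν L hL hderiv hderiv' ha2 ha'2 hlim hlim' hode hf₂
end
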